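/- The occurs-check reduction step is valid: if y is universally quantified and y is a rigid subterm of t (i.e., t is built from constants applied to arguments with y occurring along a path through constant heads, and t ≠ y), then the guarded goal ∀ȳ.(Q₁ → ⋯ → y = t → ⋯ → Qₘ → B) is intuitionistically valid, i.e., equivalent to ⊤, because the guard y = t has no unifier treating the universal variables as distinct parameters. -/

import Mathlib

/-- First-order terms: de Bruijn variables (eigenvariables) and
    application of a function symbol (a `Nat` code) to arguments. -/
inductive Tm : Type where
  | var : Nat → Tm
  | app : Nat → List Tm → Tm

namespace Tm

/-- Substitution for variables. -/
def subst (σ : Nat → Tm) : Tm → Tm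
  | var n => σ n
  | app f ts => app f (ts.attach.map (fun t => subst σ t.1))
  decreasing_by have := List.sizeOf_lt_of_mem t.2; simp_wf; omega

/-- All free variables are `< k`. -/
inductive Bv : Nat → Tm → Prop where
  | var : ∀ {k n}, n < k → Bv k (var n)
  | app : ∀ {k f ts}, (∀ t ∈ ts, Bv k t) → Bv k (app f ts)

end Tm

/-- `σ` is a unifier of `s` and `t`. -/
def Unifies (σ : Nat → Tm) (s t : Tm) : Prop := s.subst σ = t.subst σ

/-- `U` is a complete set of unifiers of `s` and `t`. -/
def IsCSU (U : Set (Nat → Tm)) (s t : Tm) : Prop :=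
  (∀ σ ∈ U, Unifies σ s t) ∧
  ∀ θ, Unifies θ s t → ∃ σ ∈ U, ∃ δ, ∀ n, (σ n).subst δ = θ n

/-- Formulas of eqLJω (first-order fragment), with de Bruijn binders. -/
inductive Fm : Type where
  | top | bot
  | atom : Nat → List Tm → Fm
  | eq : Tm → Tm → Fm
  | and : Fm → Fm → Fm
  | imp : Fm → Fm → Fm
  | all : Fm → Fm
  | ex : Fm → Fm

namespace Fm

/-- Lift a substitution under a binder. -/
def up (σ : Nat → Tm) : Nat → Tm
  | 0 => .var 0
  | n + 1 => (σ n).subst (fun k => .var (k + 1))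

/-- Apply a substitution to a formula. -/
def substF (σ : Nat → Tm) : Fm → Fm
  | top => top
  | bot => bot
  | atom p ts => atom p (ts.map (Tm.subst σ))
  | eq s t => eq (s.subst σ) (t.subst σ)
  | and A B => and (A.substF σ) (B.substF σ)
  | imp A B => imp (A.substF σ) (B.substF σ)
  | all A => all (A.substF (up σ))
  | ex A => ex (A.substF (up σ))

/-- Shift all free variables up by one. -/
def shift (A : Fm) : Fm := A.substF (fun n => .var (n + 1))

/-- Instantiate de Bruijn variable 0 with `t`. -/
def subst0 (t : Tm) (A : Fm) : Fm :=
  A.substF (fun n => match n with | 0 => t | n + 1 => .var n)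

/-- All free variables are `< k`. -/
inductive Bv : Nat → Fm → Prop where
  | top : Bv k top
  | bot : Bv k bot
  | atom : (∀ t ∈ ts, Tm.Bv k t) → Bv k (atom p ts)
  | eq : Tm.Bv k s → Tm.Bv k t → Bv k (eq s t)
  | and : Bv k A → Bv k B → Bv k (and A B)
  | imp : Bv k A → Bv k B → Bv k (imp A B)
  | all : Bv (k + 1) A → Bv k (all A)
  | ex : Bv (k + 1) A → Bv k (ex A)

end Fm

/-- The sequent calculus eqLJω: intuitionistic LJ together with the
    rules `=R` (reflexivity on the right) and `=L` (case analysis over a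
    complete set of unifiers on the left). -/
inductive Prv : List Fm → Fm → Prop where
  | init : Fm.atom p ts ∈ Γ → Prv Γ (.atom p ts)
  | topR : Prv Γ .top
  | botL : Fm.bot ∈ Γ → Prv Γ C
  | andR : Prv Γ A → Prv Γ B → Prv Γ (.and A B)
  | andL : Fm.and A B ∈ Γ → Prv (A :: B :: Γ) C → Prv Γ C
  | impR : Prv (A :: Γ) B → Prv Γ (.imp A B)
  | impL : Fm.imp A B ∈ Γ → Prv Γ A → Prv (B :: Γ) C → Prv Γ C
  | allR : Prv (Γ.map Fm.shift) A → Prv Γ (.all A)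
  | allL : Fm.all A ∈ Γ → Prv (A.subst0 t :: Γ) C → Prv Γ C
  | exR : Prv Γ (A.subst0 t) → Prv Γ (.ex A)
  | exL : Fm.ex A ∈ Γ → Prv (A :: Γ.map Fm.shift) C.shift → Prv Γ C
  | eqR : Prv Γ (.eq t t)
  | eqL : Fm.eq s t ∈ Γ → IsCSU U s t →
      (∀ σ ∈ U, Prv (Γ.map (Fm.substF σ)) (C.substF σ)) → Prv Γ C

/-- `s` is an immediate rigid subterm of `t` (argument of a constant head). -/
inductive RSub : Tm → Tm → Prop where
  | mk : ∀ {s f ts}, s ∈ ts → RSub s (.app f ts)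

/-- `s` is a rigid subterm of `t`. -/
def RigidSub (s t : Tm) : Prop := Relation.TransGen RSub s t

/-- Prefix a formula with `m` universal quantifiers. -/
def alls : Nat → Fm → Fm
  | 0, F => F
  | n + 1, F => .all (alls n F)

/-- Guard a formula by a list of equations. -/
def guards (Qs : List (Tm × Tm)) (B : Fm) : Fm :=
  Qs.foldr (fun q F => .imp (.eq q.1 q.2) F) B

/-! Substitution commutes with taking an argument of a constant head, so a rigid subterm stays a
rigid subterm after any substitution, and rigid subterms are strictly smaller. Hence `y = t` has no
unifier, the empty set is a complete set of unifiers for it, and `=L` closes the goal with no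
premises. -/

theorem Tm.subst_app (σ : Nat → Tm) (f : Nat) (ts : List Tm) :
    (Tm.app f ts).subst σ = .app f (ts.map (Tm.subst σ)) := by
  rw [Tm.subst, List.attach_map_val]

theorem RSub.subst {s t : Tm} (h : RSub s t) (σ : Nat → Tm) : RSub (s.subst σ) (t.subst σ) := by
  obtain ⟨hmem⟩ := h
  rw [Tm.subst_app]
  exact .mk (List.mem_map_of_mem hmem)

theorem RSub.sizeOf_lt {s t : Tm} (h : RSub s t) : sizeOf s < sizeOf t := by
  obtain ⟨hmem⟩ := h
  have := List.sizeOf_lt_of_mem hmem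
  simp only [Tm.app.sizeOf_spec]
  omega

theorem RigidSub.subst {s t : Tm} (h : RigidSub s t) (σ : Nat → Tm) :
    RigidSub (s.subst σ) (t.subst σ) :=
  Relation.TransGen.lift (Tm.subst σ) (fun _ _ h => h.subst σ) _ _ h

theorem RigidSub.sizeOf_lt {s t : Tm} (h : RigidSub s t) : sizeOf s < sizeOf t :=
  Relation.TransGen.trans_induction_on h (fun h => h.sizeOf_lt) (fun _ _ h₁ h₂ => h₁.trans h₂)

theorem RigidSub.not_unifies {s t : Tm} (h : RigidSub s t) (σ : Nat → Tm) : ¬ Unifies σ s t :=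
  fun hσ => by
    have := (h.subst σ).sizeOf_lt
    rw [hσ] at this
    exact lt_irrefl _ this

theorem isCSU_empty {s t : Tm} (h : ∀ σ, ¬ Unifies σ s t) : IsCSU ∅ s t :=
  ⟨fun _ hσ => absurd hσ (Set.notMem_empty _), fun θ hθ => absurd hθ (h θ)⟩

namespace Prv

variable {s t : Tm} {Γ : List Fm}

theorem of_eq_mem_of_not_unifies (h : ∀ σ, ¬ Unifies σ s t) (hmem : Fm.eq s t ∈ Γ) {C : Fm} :
    Prv Γ C :=
  eqL hmem (isCSU_empty h) fun _ hσ => absurd hσ (Set.notMem_empty _)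

theorem guards_of_eq_mem_of_not_unifies (h : ∀ σ, ¬ Unifies σ s t) (hmem : Fm.eq s t ∈ Γ)
    (Qs : List (Tm × Tm)) (B : Fm) : Prv Γ (guards Qs B) := by
  induction Qs generalizing Γ with
  | nil => exact of_eq_mem_of_not_unifies h hmem
  | cons _ _ ih => exact impR (ih (List.mem_cons_of_mem _ hmem))

theorem guards_of_not_unifies (h : ∀ σ, ¬ Unifies σ s t) (Qs₁ Qs₂ : List (Tm × Tm)) (B : Fm) :
    Prv Γ (guards (Qs₁ ++ (s, t) :: Qs₂) B) := by
  induction Qs₁ generalizing Γ with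
  | nil => exact impR (guards_of_eq_mem_of_not_unifies h List.mem_cons_self Qs₂ B)
  | cons _ _ ih => exact impR ih

theorem alls_nil {F : Fm} (h : Prv [] F) : ∀ m, Prv [] (_root_.alls m F)
  | 0 => h
  | m + 1 => allR (alls_nil h m)

end Prv

theorem occurs_check_valid_general (n : Nat) (t : Tm)
    (hrig : RigidSub (.var n) t)
    (m : Nat) (Qs₁ Qs₂ : List (Tm × Tm)) (B : Fm) :
    (∀ σ : Nat → Tm, ¬ Unifies σ (.var n) t) ∧
    Prv [] (alls m (guards (Qs₁ ++ (Tm.var n, t) :: Qs₂) B)) :=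
  ⟨hrig.not_unifies, Prv.alls_nil (Prv.guards_of_not_unifies hrig.not_unifies Qs₁ Qs₂ B) m⟩

/-- the occurs-check reduction step is valid.  If `y` (a
    universally quantified variable, here de Bruijn index `n < m`) is a rigid
    subterm of `t` (so in particular `t ≠ y`), then the guard `y = t` has no
    unifier, and the guarded goal `∀ȳ.(Q₁ → ⋯ → y = t → ⋯ → Qₘ → B)` is
    provable, i.e. equivalent to ⊤. -/
theorem occurs_check_valid (n : Nat) (t : Tm) (hne : t ≠ .var n)
    (hrig : RigidSub (.var n) t)
    (m : Nat) (hn : n < m) (Qs₁ Qs₂ : List (Tm × Tm)) (B : Fm) :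
    (∀ σ : Nat → Tm, ¬ Unifies σ (.var n) t) ∧
    Prv [] (alls m (guards (Qs₁ ++ (Tm.var n, t) :: Qs₂) B)) :=
  occurs_check_valid_general n t hrig m Qs₁ Qs₂ B
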